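/- arXiv:0704.3373 — 3 statements merged into one kernel-verified Lean document; each statement's English description precedes it below -/
import Mathlib

section
/- Fix n ≥ 1 and a nonzero vector ξ ∈ ℝⁿ; write |ξ| for its Euclidean norm. Let B and σ be real symmetric n×n matrices such that B − (trace B)·Iₙ is negative definite and σ is positive definite. Let h = (h_{ab})_{0 ≤ a,b ≤ n} be a complex symmetric (n+1)×(n+1) matrix and set tr h = Σ_{a=0}^{n} h_{aa}. Suppose that: (1) for each k = 1,…,n, 2|ξ| h_{0k} − 2i Σ_{j=1}^{n} ξ_j h_{jk} + i ξ_k (tr h) = 0; (2) 2|ξ| h_{00} − 2i Σ_{k=1}^{n} ξ_k h_{0k} − |ξ| (tr h) = 0; (3) there exists φ ∈ ℂ with h_{kl} = φ B_{kl} for all 1 ≤ k, l ≤ n; (4) |ξ| Σ_{i,j=1}^{n} σ_{ij} h_{ij} + 2i Σ_{i,j=1}^{n} σ_{ij} ξ_i h_{0j} = 0. Then h = 0. -/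
open scoped Matrix
open Complex Matrix

/-!
Contracting the equations (1) with ξ and inserting the result into (2) eliminates `h₀₀` and the
`h₀ₖ`, leaving `φ · ξᵀ(B - (tr B) I)ξ = 0`; negativity gives `φ = 0`, so the tangential block
vanishes. Then (1) says `2|ξ| h₀ₖ = -i ξₖ h₀₀`, which turns (4) into `h₀₀ · ξᵀσξ = 0`, and
positivity of `σ` gives `h₀₀ = 0`, hence `h₀ₖ = 0`.
-/

namespace Matrix

theorem IsSymm.eq_zero_of_fin_succ {α : Type*} [Zero α] {n : ℕ}
    {h : Matrix (Fin (n + 1)) (Fin (n + 1)) α} (hsymm : h.IsSymm) (h00 : h 0 0 = 0)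
    (h0 : ∀ k : Fin n, h 0 k.succ = 0) (hsucc : ∀ k l : Fin n, h k.succ l.succ = 0) : h = 0 := by
  ext i j
  refine Fin.cases ?_ (fun i' => ?_) i <;> refine Fin.cases ?_ (fun j' => ?_) j
  · exact h00
  · exact h0 j'
  · exact (hsymm.apply 0 i'.succ).trans (h0 i')
  · exact hsucc i' j'

theorem dotProduct_sub_trace_smul_mulVec {ι R : Type*} [Fintype ι] [DecidableEq ι] [CommRing R]
    (x : ι → R) (B : Matrix ι ι R) :
    x ⬝ᵥ (B - B.trace • 1) *ᵥ x = x ⬝ᵥ B *ᵥ x - B.trace * (x ⬝ᵥ x) := by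
  simp only [sub_mulVec, smul_mulVec, one_mulVec, dotProduct_sub, dotProduct_smul, smul_eq_mul]

theorem trace_map_ofReal {ι : Type*} [Fintype ι] (A : Matrix ι ι ℝ) :
    (A.map ofReal).trace = A.trace := by
  simp [Matrix.trace]

theorem dotProduct_mulVec_eq_sum_sum {ι R : Type*} [Fintype ι] [CommSemiring R]
    (x w : ι → R) (S : Matrix ι ι R) : x ⬝ᵥ S *ᵥ w = ∑ i, ∑ j, S i j * x i * w j := by
  simp only [dotProduct, mulVec, Finset.mul_sum]
  exact Finset.sum_congr rfl fun i _ => Finset.sum_congr rfl fun j _ => by ring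

end Matrix

namespace Complex

theorem ofReal_dotProduct {ι : Type*} [Fintype ι] (v w : ι → ℝ) :
    ((v ⬝ᵥ w : ℝ) : ℂ) = (ofReal ∘ v) ⬝ᵥ (ofReal ∘ w) :=
  ofRealHom.map_dotProduct v w

theorem ofReal_dotProduct_mulVec {ι : Type*} [Fintype ι] (v w : ι → ℝ) (A : Matrix ι ι ℝ) :
    ((v ⬝ᵥ A *ᵥ w : ℝ) : ℂ) = (ofReal ∘ v) ⬝ᵥ A.map ofReal *ᵥ (ofReal ∘ w) := by
  rw [ofReal_dotProduct]
  congr 1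
  exact funext (ofRealHom.map_mulVec A w)

end Complex

theorem EuclideanSpace.ofLp_dotProduct_self {ι : Type*} [Fintype ι] (ξ : EuclideanSpace ℝ ι) :
    ξ.ofLp ⬝ᵥ ξ.ofLp = ‖ξ‖ ^ 2 := by
  rw [EuclideanSpace.real_norm_sq_eq]
  simp only [dotProduct, sq]

section
variable {n : ℕ} {N a φ : ℂ} {x w : Fin n → ℂ}

theorem mul_dotProduct_mulVec_sub_eq_zero {M : Matrix (Fin n) (Fin n) ℂ} (hx : x ⬝ᵥ x = N ^ 2)
    (h1 : ∀ k, 2 * N * w k - 2 * I * (φ * (x ᵥ* M) k) + I * x k * (a + φ * M.trace) = 0)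
    (h2 : 2 * N * a - 2 * I * (x ⬝ᵥ w) - N * (a + φ * M.trace) = 0) :
    φ * (x ⬝ᵥ M *ᵥ x - M.trace * N ^ 2) = 0 := by
  set T := a + φ * M.trace
  have hvec : (2 * N) • w - (2 * I * φ) • (x ᵥ* M) + (I * T) • x = 0 :=
    funext fun k => by
      simp only [Pi.add_apply, Pi.sub_apply, Pi.smul_apply, smul_eq_mul, Pi.zero_apply]
      linear_combination h1 k
  have hcontract : 2 * N * (x ⬝ᵥ w) = 2 * I * φ * (x ⬝ᵥ M *ᵥ x) - I * N ^ 2 * T := by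
    have := congrArg (x ⬝ᵥ ·) hvec
    simp only [dotProduct_add, dotProduct_sub, dotProduct_smul, smul_eq_mul, dotProduct_zero,
      dotProduct_comm x (x ᵥ* M), hx] at this
    rw [dotProduct_mulVec]
    linear_combination this
  linear_combination (N * h2 + I * hcontract) / 2 + (φ * (x ⬝ᵥ M *ᵥ x) - N ^ 2 * T / 2) * I_sq

theorem eq_zero_and_eq_zero_of_dotProduct_mulVec_eq_zero {S : Matrix (Fin n) (Fin n) ℂ}
    (hN : N ≠ 0) (hS : x ⬝ᵥ S *ᵥ x ≠ 0)
    (h1 : ∀ k, 2 * N * w k + I * x k * a = 0) (h4 : x ⬝ᵥ S *ᵥ w = 0) : a = 0 ∧ w = 0 := by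
  have hw : w = (-(I * a) / (2 * N)) • x := funext fun k => by
    simp only [Pi.smul_apply, smul_eq_mul]
    field_simp
    linear_combination h1 k
  have ha : a = 0 := by
    rw [hw, mulVec_smul, dotProduct_smul, smul_eq_mul] at h4
    simpa [I_ne_zero, hN, hS] using h4
  exact ⟨ha, by simp [hw, ha]⟩

end

theorem isometry_extension_stmt_2_general
    {n : ℕ} (ξ : EuclideanSpace ℝ (Fin n)) (hξ : ξ ≠ 0)
    (B σ : Matrix (Fin n) (Fin n) ℝ)
    (hBneg : ∀ x : Fin n → ℝ, x ≠ 0 → x ⬝ᵥ (B - B.trace • (1 : Matrix (Fin n) (Fin n) ℝ)).mulVec x < 0)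
    (hσpos : σ.PosDef)
    (h : Matrix (Fin (n + 1)) (Fin (n + 1)) ℂ) (hsymm : h.IsSymm)
    (h1 : ∀ k : Fin n,
      2 * (‖ξ‖ : ℂ) * h 0 k.succ - 2 * Complex.I * ∑ j : Fin n, (ξ j : ℂ) * h j.succ k.succ
        + Complex.I * (ξ k : ℂ) * h.trace = 0)
    (h2 : 2 * (‖ξ‖ : ℂ) * h 0 0 - 2 * Complex.I * ∑ k : Fin n, (ξ k : ℂ) * h 0 k.succ
        - (‖ξ‖ : ℂ) * h.trace = 0)
    (h3 : ∃ φ : ℂ, ∀ k l : Fin n, h k.succ l.succ = φ * (B k l : ℂ))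
    (h4 : (‖ξ‖ : ℂ) * ∑ i : Fin n, ∑ j : Fin n, (σ i j : ℂ) * h i.succ j.succ
        + 2 * Complex.I * ∑ i : Fin n, ∑ j : Fin n, (σ i j : ℂ) * (ξ i : ℂ) * h 0 j.succ = 0) :
    h = 0 := by
  obtain ⟨φ, hφ⟩ := h3
  have hξ' : ξ.ofLp ≠ 0 := by simpa using hξ
  have hxx : (ofReal ∘ ξ.ofLp) ⬝ᵥ (ofReal ∘ ξ.ofLp) = (‖ξ‖ : ℂ) ^ 2 := by
    rw [← ofReal_dotProduct, EuclideanSpace.ofLp_dotProduct_self, ofReal_pow]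
  have htrace : h.trace = h 0 0 + φ * (B.map ofReal).trace := by
    simp [Matrix.trace, Fin.sum_univ_succ, hφ, Finset.mul_sum]
  have hφ0 : φ = 0 := by
    refine (mul_eq_zero.1 (mul_dotProduct_mulVec_sub_eq_zero (M := B.map ofReal) (a := h 0 0)
      (w := fun k => h 0 k.succ) hxx (fun k => ?_) ?_)).resolve_right ?_
    · simpa [vecMul, dotProduct, hφ, Finset.mul_sum, mul_left_comm, ← htrace] using h1 k
    · simpa [dotProduct, ← htrace] using h2
    · have hQ := hBneg _ hξ'
      rw [dotProduct_sub_trace_smul_mulVec, EuclideanSpace.ofLp_dotProduct_self] at hQ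
      rw [← ofReal_dotProduct_mulVec, trace_map_ofReal]
      exact_mod_cast hQ.ne
  have htan : ∀ k l : Fin n, h k.succ l.succ = 0 := by simp [hφ, hφ0]
  have hP : (ofReal ∘ ξ.ofLp) ⬝ᵥ σ.map ofReal *ᵥ (ofReal ∘ ξ.ofLp) ≠ 0 := by
    rw [← ofReal_dotProduct_mulVec, ofReal_ne_zero]
    simpa using (hσpos.dotProduct_mulVec_pos hξ').ne'
  obtain ⟨h00, h0⟩ := eq_zero_and_eq_zero_of_dotProduct_mulVec_eq_zero (a := h 0 0)
    (w := fun k => h 0 k.succ) (ofReal_ne_zero.2 (norm_ne_zero_iff.2 hξ)) hP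
    (fun k => by simpa [htan, htrace, hφ0] using h1 k)
    (by simpa [dotProduct_mulVec_eq_sum_sum, htan, I_ne_zero] using h4)
  exact hsymm.eq_zero_of_fin_succ h00 (congrFun h0) htan

/-- The algebraic core of ellipticity of the Bianchi-gauged linearized Einstein operator
with the boundary conditions `β(h) = 0`, `[hᵀ]_B = h₁`, `tr_σ A'_h = h₂`: the system
obtained by evaluating the symbols of the boundary operators at the root `z = i|ξ|`
has only the trivial solution. -/
theorem isometry_extension_stmt_2
    {n : ℕ} (hn : 1 ≤ n) (ξ : EuclideanSpace ℝ (Fin n)) (hξ : ξ ≠ 0)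
    (B σ : Matrix (Fin n) (Fin n) ℝ) (hBsymm : B.IsSymm) (hσsymm : σ.IsSymm)
    (hBneg : ∀ x : Fin n → ℝ, x ≠ 0 → x ⬝ᵥ (B - B.trace • (1 : Matrix (Fin n) (Fin n) ℝ)).mulVec x < 0)
    (hσpos : σ.PosDef)
    (h : Matrix (Fin (n + 1)) (Fin (n + 1)) ℂ) (hsymm : h.IsSymm)
    (h1 : ∀ k : Fin n,
      2 * (‖ξ‖ : ℂ) * h 0 k.succ - 2 * Complex.I * ∑ j : Fin n, (ξ j : ℂ) * h j.succ k.succ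
        + Complex.I * (ξ k : ℂ) * h.trace = 0)
    (h2 : 2 * (‖ξ‖ : ℂ) * h 0 0 - 2 * Complex.I * ∑ k : Fin n, (ξ k : ℂ) * h 0 k.succ
        - (‖ξ‖ : ℂ) * h.trace = 0)
    (h3 : ∃ φ : ℂ, ∀ k l : Fin n, h k.succ l.succ = φ * (B k l : ℂ))
    (h4 : (‖ξ‖ : ℂ) * ∑ i : Fin n, ∑ j : Fin n, (σ i j : ℂ) * h i.succ j.succ
        + 2 * Complex.I * ∑ i : Fin n, ∑ j : Fin n, (σ i j : ℂ) * (ξ i : ℂ) * h 0 j.succ = 0) :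
    h = 0 :=
  isometry_extension_stmt_2_general ξ hξ B σ hBneg hσpos h hsymm h1 h2 h3 h4
end

section
/- Let H be a real Hilbert space and T : H → H a bounded linear operator whose kernel K = ker T is finite-dimensional and whose range equals the orthogonal complement Kᗮ of K. Let Q ⊆ H be a finite-dimensional subspace with dim Q = dim K such that no nonzero element of Q is orthogonal to K, and let P_Q denote the orthogonal projection of H onto Q. Then the operator T̃ = T + P_Q is a linear bijection of H onto itself. -/
/-!
Let `K = ker T`. No nonzero vector of `Q` lies in `Kᗮ`, so the projection `Q → K` is
injective, hence bijective since `dim Q = dim K`; self-adjointness of the projections then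
shows that no nonzero vector of `K` lies in `Qᗮ` either. If `T x + P_Q x = 0`, then
`P_Q x = -T x ∈ Q ∩ Kᗮ` vanishes, so `x ∈ K ∩ Qᗮ` vanishes. For surjectivity, `y` is
corrected first by an element of `Q` with the same component in `K`, so that the rest lies in
`Kᗮ = range T`, and then by an element of `K` to fix the `Q`-component.
-/

open Module

namespace Submodule

variable {𝕜 E : Type*} [RCLike 𝕜] [NormedAddCommGroup E] [InnerProductSpace 𝕜 E]

theorem injective_orthogonalProjectionOnto_comp_subtype {U V : Submodule 𝕜 E}
    [V.HasOrthogonalProjection] (h : Disjoint U Vᗮ) :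
    Function.Injective (V.orthogonalProjectionOnto.toLinearMap ∘ₗ U.subtype) :=
  (injective_iff_map_eq_zero _).mpr fun u hu =>
    Subtype.ext <| disjoint_def.mp h u u.2 (orthogonalProjectionOnto_eq_zero_iff.mp hu)

theorem exists_mem_starProjection_eq_of_disjoint_orthogonal {U V : Submodule 𝕜 E}
    [FiniteDimensional 𝕜 U] [FiniteDimensional 𝕜 V] (hdim : finrank 𝕜 U = finrank 𝕜 V)
    (h : Disjoint U Vᗮ) {v : E} (hv : v ∈ V) : ∃ u ∈ U, V.starProjection u = v := by
  obtain ⟨u, hu⟩ := (LinearMap.injective_iff_surjective_of_finrank_eq_finrank hdim).mp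
    (injective_orthogonalProjectionOnto_comp_subtype h) ⟨v, hv⟩
  exact ⟨u, u.2, congrArg Subtype.val hu⟩

theorem disjoint_orthogonal_symm {U V : Submodule 𝕜 E}
    [FiniteDimensional 𝕜 U] [FiniteDimensional 𝕜 V] (hdim : finrank 𝕜 U = finrank 𝕜 V)
    (h : Disjoint U Vᗮ) : Disjoint V Uᗮ := by
  refine disjoint_def.mpr fun v hv hvU => ?_
  obtain ⟨u, hu, rfl⟩ := exists_mem_starProjection_eq_of_disjoint_orthogonal hdim h hv
  rw [← inner_self_eq_zero (𝕜 := 𝕜), inner_starProjection_left_eq_right,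
    starProjection_eq_self_iff.mpr hv]
  exact hvU u hu

end Submodule

namespace ContinuousLinearMap

variable {𝕜 E : Type*} [RCLike 𝕜] [NormedAddCommGroup E] [InnerProductSpace 𝕜 E]
  (T : E →L[𝕜] E) (Q : Submodule 𝕜 E) [Q.HasOrthogonalProjection]

theorem injective_add_starProjection
    (hQ : Disjoint Q (LinearMap.range (T : E →ₗ[𝕜] E)))
    (hK : Disjoint (LinearMap.ker (T : E →ₗ[𝕜] E)) Qᗮ) :
    Function.Injective (T + Q.starProjection) := by
  refine (injective_iff_map_eq_zero _).mpr fun x hx => ?_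
  have hPx : Q.starProjection x = -T x := eq_neg_of_add_eq_zero_right hx
  have hPx_zero : Q.starProjection x = 0 := Submodule.disjoint_def.mp hQ _
    (Q.starProjection_apply_mem x) (hPx ▸ neg_mem (LinearMap.mem_range_self _ x))
  have hTx : T x = 0 := by simpa [hPx_zero] using hx
  exact Submodule.disjoint_def.mp hK x hTx ((Q.starProjection_apply_eq_zero_iff).mp hPx_zero)

theorem surjective_add_starProjection
    [(LinearMap.ker (T : E →ₗ[𝕜] E)).HasOrthogonalProjection]
    (hrange : (LinearMap.ker (T : E →ₗ[𝕜] E))ᗮ ≤ LinearMap.range (T : E →ₗ[𝕜] E))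
    (hQK : ∀ k ∈ LinearMap.ker (T : E →ₗ[𝕜] E), ∃ q ∈ Q,
      (LinearMap.ker (T : E →ₗ[𝕜] E)).starProjection q = k)
    (hKQ : ∀ q ∈ Q, ∃ k ∈ LinearMap.ker (T : E →ₗ[𝕜] E), Q.starProjection k = q) :
    Function.Surjective (T + Q.starProjection) := by
  intro y
  obtain ⟨q, hq, hqy⟩ := hQK _ (Submodule.starProjection_apply_mem _ y)
  obtain ⟨u, hu⟩ : ∃ u, T u = y - q :=
    hrange <| (Submodule.starProjection_apply_eq_zero_iff _).mp (by rw [map_sub, hqy, sub_self])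
  obtain ⟨k, hk, hkq⟩ := hKQ _ (sub_mem hq (Q.starProjection_apply_mem u))
  have hTk : T k = 0 := hk
  refine ⟨u + k, ?_⟩
  simp only [add_apply, map_add, hTk, hkq, hu]
  abel

end ContinuousLinearMap

theorem isometry_extension_stmt_5_general
    {H : Type*} [NormedAddCommGroup H] [InnerProductSpace ℝ H]
    (T : H →L[ℝ] H) [FiniteDimensional ℝ (LinearMap.ker (T : H →ₗ[ℝ] H))]
    (hrange : LinearMap.range (T : H →ₗ[ℝ] H) = (LinearMap.ker (T : H →ₗ[ℝ] H))ᗮ)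
    (Q : Submodule ℝ H) [FiniteDimensional ℝ Q]
    (hdim : Module.finrank ℝ Q = Module.finrank ℝ (LinearMap.ker (T : H →ₗ[ℝ] H)))
    (hQ : ∀ q ∈ Q, q ≠ 0 → ∃ k ∈ LinearMap.ker (T : H →ₗ[ℝ] H), (inner ℝ q k : ℝ) ≠ 0) :
    Function.Bijective fun x : H => T x + (Q.subtypeL.comp (Submodule.orthogonalProjectionOnto Q)) x := by
  have hQK : Disjoint Q (LinearMap.ker (T : H →ₗ[ℝ] H))ᗮ := by
    refine Submodule.disjoint_def.mpr fun q hq hqK => by_contra fun hq0 => ?_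
    obtain ⟨k, hk, hqk⟩ := hQ q hq hq0
    exact hqk (real_inner_comm k q ▸ hqK k hk)
  have hKQ := Submodule.disjoint_orthogonal_symm hdim hQK
  exact ⟨T.injective_add_starProjection Q (hrange ▸ hQK) hKQ,
    T.surjective_add_starProjection Q hrange.ge
      (fun _ => Submodule.exists_mem_starProjection_eq_of_disjoint_orthogonal hdim hQK)
      (fun _ => Submodule.exists_mem_starProjection_eq_of_disjoint_orthogonal hdim.symm hKQ)⟩

/-- If `T` is a bounded operator on a real Hilbert space with finite-dimensional kernel
`K` and range `Kᗮ`, and `Q` is a finite-dimensional subspace with `dim Q = dim K` such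
that no nonzero element of `Q` is orthogonal to `K`, then `T̃ = T + P_Q` (with `P_Q`
the orthogonal projection onto `Q`) is a bijection of `H`. -/
theorem isometry_extension_stmt_5
    {H : Type*} [NormedAddCommGroup H] [InnerProductSpace ℝ H] [CompleteSpace H]
    (T : H →L[ℝ] H) [FiniteDimensional ℝ (LinearMap.ker (T : H →ₗ[ℝ] H))]
    (hrange : LinearMap.range (T : H →ₗ[ℝ] H) = (LinearMap.ker (T : H →ₗ[ℝ] H))ᗮ)
    (Q : Submodule ℝ H) [FiniteDimensional ℝ Q]
    (hdim : Module.finrank ℝ Q = Module.finrank ℝ (LinearMap.ker (T : H →ₗ[ℝ] H)))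
    (hQ : ∀ q ∈ Q, q ≠ 0 → ∃ k ∈ LinearMap.ker (T : H →ₗ[ℝ] H), (inner ℝ q k : ℝ) ≠ 0) :
    Function.Bijective fun x : H => T x + (Q.subtypeL.comp (Submodule.orthogonalProjectionOnto Q)) x :=
  isometry_extension_stmt_5_general T hrange Q hdim hQ
end

section
/- Let n ≥ 1 and N ≥ 1. Let Ω be a metric space, let p₁, …, p_N ∈ Ω be points with pairwise disjoint open neighborhoods U₁, …, U_N, and let A₁, …, A_N : Ω → Sym(n, ℝ) be continuous maps, each taking values in the trace-free real symmetric n×n matrices, such that for each i ∈ {1, …, N} the matrices A₁(p_i), …, A_N(p_i) are linearly independent. Then there exists a continuous map B : Ω → Sym(n, ℝ) such that B(x) is positive semidefinite for every x ∈ Ω, B vanishes outside U₁ ∪ … ∪ U_N, and for every nonzero coefficient vector (c₁, …, c_N) ∈ ℝᴺ there exists an index i with trace(B(p_i)·Σ_{j=1}^{N} c_j A_j(p_i)) ≠ 0. -/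
/-!
With bump functions `φ i` supported in `U i` and vectors `v i`, the form
`B = ∑ i, φ i • v i v iᵀ` is positive semidefinite and equals `v i v iᵀ` at `p i`, where
`tr (B (p i) · ∑ j, c j • A j (p i)) = ∑ j, c j · v iᵀ A j (p i) v i`. So it suffices to pick the
`v i` making the rows `(v iᵀ A j (p i) v i)_j` linearly independent in `ℝᴺ`. This is done
greedily: a symmetric matrix is determined by its quadratic form, so by the linear independence
of the `A j (p i)` the rows available at `p i` span `ℝᴺ`, and one of them avoids the span of the
rows already chosen.
-/

open Matrix Submodule Set

theorem exists_continuous_bump_of_mem_isOpen {X : Type*} [TopologicalSpace X] [NormalSpace X]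
    [T1Space X] {x : X} {U : Set X} (hU : IsOpen U) (hx : x ∈ U) :
    ∃ f : C(X, ℝ), (∀ y, 0 ≤ f y) ∧ f x = 1 ∧ ∀ y ∉ U, f y = 0 := by
  obtain ⟨f, hf_zero, hf_one, hf_mem⟩ := exists_continuous_zero_one_of_isClosed
    hU.isClosed_compl isClosed_singleton (disjoint_singleton_right.2 (not_not.2 hx))
  exact ⟨f, fun y => (hf_mem y).1, hf_one rfl, fun y hy => hf_zero hy⟩

theorem exists_linearIndependent_mem_of_span_eq_top {K V : Type*} [DivisionRing K]
    [AddCommGroup V] [Module K V] [FiniteDimensional K V] :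
    ∀ {m : ℕ}, m ≤ Module.finrank K V → ∀ S : Fin m → Set V, (∀ i, span K (S i) = ⊤) →
      ∃ w : Fin m → V, (∀ i, w i ∈ S i) ∧ LinearIndependent K w
  | 0, _, _, _ => ⟨Fin.elim0, fun i => i.elim0, linearIndependent_empty_type⟩
  | m + 1, hm, S, hS => by
    obtain ⟨w, hwS, hw⟩ :=
      exists_linearIndependent_mem_of_span_eq_top (by omega) (S ∘ Fin.castSucc) fun i => hS _
    have hw_ne_top : span K (range w) ≠ ⊤ := by
      intro h
      have := finrank_span_eq_card hw
      rw [h, finrank_top, Fintype.card_fin] at this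
      omega
    obtain ⟨x, hxS, hx⟩ : ∃ x ∈ S (Fin.last m), x ∉ span K (range w) := by
      by_contra! h
      exact hw_ne_top (eq_top_iff.2 ((hS _).ge.trans (span_le.2 h)))
    exact ⟨Fin.snoc w x, Fin.lastCases (by simpa) (by simpa using hwS),
      linearIndependent_finSnoc.2 ⟨hw, hx⟩⟩

namespace Matrix

theorem trace_vecMulVec_self_mul {R n : Type*} [CommSemiring R] [Fintype n] (v : n → R)
    (M : Matrix n n R) : (vecMulVec v v * M).trace = v ⬝ᵥ M *ᵥ v := by
  rw [vecMulVec_mul, trace_vecMulVec, dotProduct_comm, ← dotProduct_mulVec]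

variable {K n : Type*} [Field K] [Fintype n] [DecidableEq n]

theorem eq_zero_of_linearIndependent_of_forall_dotProduct_eq_zero {w : n → n → K}
    (hw : LinearIndependent K w) {c : n → K} (hc : ∀ i, w i ⬝ᵥ c = 0) : c = 0 :=
  (mulVec_injective_iff_isUnit.2 (linearIndependent_rows_iff_isUnit (A := of w) |>.1 hw))
    (by ext i; simpa [mulVec] using hc i)

variable [NeZero (2 : K)]

theorem IsSymm.eq_zero_of_forall_dotProduct_mulVec_self {T : Matrix n n K} (hT : T.IsSymm)
    (h : ∀ v, v ⬝ᵥ T *ᵥ v = 0) : T = 0 := by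
  have hB : (toBilin' T).IsSymm := by
    rw [← LinearMap.BilinForm.isSymm_toMatrix_iff_isSymm (Pi.basisFun K n)]
    simpa using hT
  simpa using LinearMap.BilinForm.ext_of_isSymm hB LinearMap.BilinForm.isSymm_zero
    fun x => by simpa [toBilin'_apply'] using h x

theorem span_range_dotProduct_mulVec_self_eq_top {ι : Type*} [Fintype ι] [DecidableEq ι]
    {E : ι → Matrix n n K} (hsymm : ∀ j, (E j).IsSymm) (hE : LinearIndependent K E) :
    span K (range fun v : n → K => fun j => v ⬝ᵥ E j *ᵥ v) = ⊤ := by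
  by_contra hne
  obtain ⟨f, hf, hle⟩ := exists_le_ker_of_lt_top _ (lt_top_iff_ne_top.2 hne)
  set a := (dotProductEquiv K ι).symm f
  have hfa : f = dotProductEquiv K ι a := by simp [a]
  have hT_symm : (∑ j, a j • E j).IsSymm := by
    simp only [IsSymm, transpose_sum, transpose_smul, (hsymm _).eq]
  have hT : ∑ j, a j • E j = 0 := hT_symm.eq_zero_of_forall_dotProduct_mulVec_self fun v => by
    have := hle (subset_span ⟨v, rfl⟩)
    rw [LinearMap.mem_ker, hfa] at this
    simp only [sum_mulVec, dotProduct_sum, smul_mulVec, dotProduct_smul, smul_eq_mul]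
    simpa [dotProduct] using this
  have ha : a = 0 := funext (Fintype.linearIndependent_iff.1 hE a hT)
  exact hf (by rw [hfa, ha, map_zero])

theorem exists_linearIndependent_dotProduct_mulVec_self {N : ℕ}
    (E : Fin N → Fin N → Matrix n n K)
    (hsymm : ∀ i j, (E i j).IsSymm) (hE : ∀ i, LinearIndependent K (E i)) :
    ∃ v : Fin N → n → K, LinearIndependent K fun i j => v i ⬝ᵥ E i j *ᵥ v i := by
  obtain ⟨w, hwS, hw⟩ := exists_linearIndependent_mem_of_span_eq_top (by simp)
    (fun i => range fun v j => v ⬝ᵥ E i j *ᵥ v)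
    fun i => span_range_dotProduct_mulVec_self_eq_top (hsymm i) (hE i)
  choose v hv using hwS
  exact ⟨v, funext (fun i => (hv i).symm) ▸ hw⟩

end Matrix

theorem isometry_extension_stmt_10_general
    {n N : ℕ}
    {Ω : Type*} [MetricSpace Ω]
    (p : Fin N → Ω) (U : Fin N → Set Ω)
    (hUopen : ∀ i, IsOpen (U i)) (hpU : ∀ i, p i ∈ U i)
    (hdisj : ∀ i j, i ≠ j → Disjoint (U i) (U j))
    (A : Fin N → Ω → Matrix (Fin n) (Fin n) ℝ)
    (hAsymm : ∀ j x, (A j x).IsSymm)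
    (hindep : ∀ i : Fin N, LinearIndependent ℝ fun j : Fin N => A j (p i)) :
    ∃ B : Ω → Matrix (Fin n) (Fin n) ℝ,
      Continuous B ∧
      (∀ x, (B x).PosSemidef) ∧
      (∀ x, x ∉ ⋃ i, U i → B x = 0) ∧
      ∀ c : Fin N → ℝ, c ≠ 0 →
        ∃ i, (B (p i) * ∑ j : Fin N, c j • A j (p i)).trace ≠ 0 := by
  choose φ hφ_nonneg hφ_one hφ_zero using
    fun i => exists_continuous_bump_of_mem_isOpen (hUopen i) (hpU i)
  obtain ⟨v, hv⟩ := exists_linearIndependent_dotProduct_mulVec_self (fun i j => A j (p i))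
    (fun _ _ => hAsymm _ _) hindep
  set B : Ω → Matrix (Fin n) (Fin n) ℝ := fun x => ∑ k, φ k x • vecMulVec (v k) (v k)
  have hB_at : ∀ i, B (p i) = vecMulVec (v i) (v i) := fun i => by
    change ∑ k, φ k (p i) • vecMulVec (v k) (v k) = _
    rw [Finset.sum_eq_single i (fun k _ hki => by
      rw [hφ_zero k _ (disjoint_right.1 (hdisj k i hki) (hpU i)), zero_smul]) (by simp),
      hφ_one, one_smul]
  have hpsd : ∀ k, (vecMulVec (v k) (v k)).PosSemidef := fun k => by
    simpa using posSemidef_vecMulVec_self_star (v k)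
  have hpair : ∀ i c, (B (p i) * ∑ j, c j • A j (p i)).trace =
      (fun j => v i ⬝ᵥ A j (p i) *ᵥ v i) ⬝ᵥ c := fun i c => by
    rw [hB_at, trace_vecMulVec_self_mul, sum_mulVec, dotProduct_sum]
    simp only [smul_mulVec, dotProduct_smul, smul_eq_mul]
    exact dotProduct_comm c _
  refine ⟨B, continuous_finsetSum _ fun k _ => (φ k).continuous.smul continuous_const,
    fun x => posSemidef_sum _ fun k _ => (hpsd k).smul (hφ_nonneg k x),
    fun x hx => Finset.sum_eq_zero fun k _ => by
      rw [hφ_zero k x fun hxk => hx (mem_iUnion.2 ⟨k, hxk⟩), zero_smul],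
    fun c hc => ?_⟩
  by_contra! h
  exact hc (eq_zero_of_linearIndependent_of_forall_dotProduct_eq_zero hv fun i => hpair i c ▸ h i)

/-- The bump-function/Gram–Schmidt construction of the Appendix: given points `p i` with
pairwise disjoint open neighborhoods `U i` and continuous trace-free symmetric-matrix
valued maps `A j` whose values at each point `p i` are linearly independent, there is a
continuous positive semidefinite symmetric-matrix valued map `B`, vanishing outside
`⋃ U i`, such that every nonzero combination `Σ cⱼ Aⱼ` pairs nontrivially with `B` at
some point `p i` (with respect to the trace inner product). -/
theorem isometry_extension_stmt_10
    {n N : ℕ} (hn : 1 ≤ n) (hN : 1 ≤ N)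
    {Ω : Type*} [MetricSpace Ω]
    (p : Fin N → Ω) (U : Fin N → Set Ω)
    (hUopen : ∀ i, IsOpen (U i)) (hpU : ∀ i, p i ∈ U i)
    (hdisj : ∀ i j, i ≠ j → Disjoint (U i) (U j))
    (A : Fin N → Ω → Matrix (Fin n) (Fin n) ℝ)
    (hAcont : ∀ j, Continuous (A j))
    (hAsymm : ∀ j x, (A j x).IsSymm)
    (hAtr : ∀ j x, (A j x).trace = 0)
    (hindep : ∀ i : Fin N, LinearIndependent ℝ fun j : Fin N => A j (p i)) :
    ∃ B : Ω → Matrix (Fin n) (Fin n) ℝ,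
      Continuous B ∧
      (∀ x, (B x).PosSemidef) ∧
      (∀ x, x ∉ ⋃ i, U i → B x = 0) ∧
      ∀ c : Fin N → ℝ, c ≠ 0 →
        ∃ i, (B (p i) * ∑ j : Fin N, c j • A j (p i)).trace ≠ 0 :=
  isometry_extension_stmt_10_general p U hUopen hpU hdisj A hAsymm hindep
end
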